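/- Let λ be a composition and I a nonempty subset of {1,…,n}. Then I is comaximal with respect to λ if and only if there exists a composition ν such that I is maximal with respect to ν, λ = c_I(ν), and I λ̄ = ν̄ (where λ̄, ν̄ are the spectral vectors and I λ̄ is the point Iz evaluated at z = λ̄). -/
import Mathlib


open scoped BigOperators Classical

noncomputable section

/-- The ground field `F = ℚ(q,t)`. -/
abbrev F : Type := FractionRing (MvPolynomial (Fin 2) ℚ)

/-- The indeterminate `q` of `F = ℚ(q,t)`. -/
def q : F := algebraMap (MvPolynomial (Fin 2) ℚ) F (MvPolynomial.X 0)

/-- The indeterminate `t` of `F = ℚ(q,t)`. -/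
def t : F := algebraMap (MvPolynomial (Fin 2) ℚ) F (MvPolynomial.X 1)

/-- A composition with (at most) `n` parts: nonzero entries only in positions `1,…,n`. -/
def IsComp (n : ℕ) (η : ℕ → ℕ) : Prop := ∀ j, η j ≠ 0 → j ∈ Finset.Icc 1 n

/-- The modulus `|η| = η_1 + ⋯ + η_n`. -/
def wt (n : ℕ) (η : ℕ → ℕ) : ℕ := ∑ j ∈ Finset.Icc 1 n, η j

/-- `l'_η(i) = #{j<i : η_j ≥ η_i} + #{j>i : η_j > η_i}`. -/
def lprime (n : ℕ) (η : ℕ → ℕ) (i : ℕ) : ℕ :=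
  ((Finset.Icc 1 n).filter fun j => j < i ∧ η i ≤ η j).card +
  ((Finset.Icc 1 n).filter fun j => i < j ∧ η i < η j).card

/-- The spectral vector `η̄` with parameters `qp, tp`: `η̄_i = qp^(η_i) tp^(-l'_η(i))`. -/
def spec (qp tp : F) (n : ℕ) (η : ℕ → ℕ) : ℕ → F := fun i =>
  qp ^ (η i) * tp ^ (-(lprime n η i : ℤ))

/-- The finitely supported function obtained from `η` by truncating outside `[1,n]`. -/
def truncFinsupp (n : ℕ) (η : ℕ → ℕ) : ℕ →₀ ℕ :=
  Finsupp.onFinset (Finset.Icc 1 n) (fun j => if j ∈ Finset.Icc 1 n then η j else 0)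
    (fun a ha => by by_contra h; simp [h] at ha)

/-- The point obtained from `z` by exchanging coordinates `i` and `j`. -/
def swapPt (i j : ℕ) (z : ℕ → F) : ℕ → F :=
  fun k => if k = i then z j else if k = j then z i else z k

/-- The transposition operator `s_i`. -/
def sOp (i : ℕ) (f : (ℕ → F) → F) : (ℕ → F) → F := fun z => f (swapPt i (i+1) z)

/-- The Hecke operator `H_i` (with Hecke parameter `tp`). -/
def HOp (tp : F) (i : ℕ) (f : (ℕ → F) → F) : (ℕ → F) → F := fun z =>
  (tp - 1) * z i / (z i - z (i+1)) * f z +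
    (z i - tp * z (i+1)) / (z i - z (i+1)) * f (swapPt i (i+1) z)

/-- The point `(z_n/q, z_1, …, z_{n-1})` (coordinates outside `[1,n]` unchanged). -/
def deltaPt (qp : F) (n : ℕ) (z : ℕ → F) : ℕ → F := fun k =>
  if k = 1 then z n / qp else if k ≤ n then z (k-1) else z k

/-- The operator `Φ = (z_n - t^{-n+1})·Δ`. -/
def PhiOp (qp tp : F) (n : ℕ) (f : (ℕ → F) → F) : (ℕ → F) → F := fun z =>
  (z n - tp ^ (1 - (n:ℤ))) * f (deltaPt qp n z)

/-- The operator product `H_a H_{a+1} ⋯ H_b` (the identity when `a > b`). -/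
def Hprod (tp : F) (a b : ℕ) (f : (ℕ → F) → F) : (ℕ → F) → F :=
  (List.range' a (b + 1 - a)).foldr (fun j g => HOp tp j g) f

/-- The operator `Z̃_i = H_i ⋯ H_{n-1} Φ H_1 ⋯ H_{i-1}`. -/
def Ztilde (qp tp : F) (n i : ℕ) (f : (ℕ → F) → F) : (ℕ → F) → F :=
  Hprod tp i (n-1) (PhiOp qp tp n (Hprod tp 1 (i-1) f))

/-- The Cherednik operator `Ξ_i = z_i⁻¹ + z_i⁻¹ H_i ⋯ H_{n-1} Φ H_1 ⋯ H_{i-1}`. -/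
def XiOp (qp tp : F) (n i : ℕ) (f : (ℕ → F) → F) : (ℕ → F) → F := fun z =>
  (z i)⁻¹ * f z + (z i)⁻¹ * Ztilde qp tp n i f z

/-- The operator product `Ξ_1 ⋯ Ξ̂_i ⋯ Ξ_n` (with `Ξ_i` omitted). -/
def XiProdOmit (qp tp : F) (n i : ℕ) (f : (ℕ → F) → F) : (ℕ → F) → F :=
  ((List.range' 1 n).filter (fun j => j ≠ i)).foldr (fun j g => XiOp qp tp n j g) f

/-- The operator `Z_i = t^{-binom(n,2)} (z_i Ξ_i - 1) Ξ_1 ⋯ Ξ̂_i ⋯ Ξ_n`. -/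
def ZOp (qp tp : F) (n i : ℕ) (f : (ℕ → F) → F) : (ℕ → F) → F := fun z =>
  tp ^ (-((n * (n-1) / 2 : ℕ) : ℤ)) *
    (z i * XiOp qp tp n i (XiProdOmit qp tp n i f) z - XiProdOmit qp tp n i f z)

/-- A `qp`-generic point: the quantities `z_i qp^a` (for `1 ≤ i ≤ n`, `a ∈ ℕ`) are
pairwise distinct.  All the rational operations occurring in the operators above are
defined at such points. -/
def Generic (qp : F) (n : ℕ) (z : ℕ → F) : Prop :=
  ∀ i ∈ Finset.Icc 1 n, ∀ j ∈ Finset.Icc 1 n, ∀ a b : ℕ,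
    (i ≠ j ∨ a ≠ b) → z i * qp ^ a ≠ z j * qp ^ b

/-- The Demazure-Lusztig operator `T_i`. -/
def TOp (tp : F) (i : ℕ) (f : (ℕ → F) → F) : (ℕ → F) → F := fun z =>
  tp * f z + (tp * z i - z (i+1)) / (z i - z (i+1)) * (f (swapPt i (i+1) z) - f z)

/-- The inverse Demazure-Lusztig operator `T_i⁻¹ = t⁻¹ - 1 + t⁻¹ T_i`. -/
def TinvOp (tp : F) (i : ℕ) (f : (ℕ → F) → F) : (ℕ → F) → F := fun z =>
  (tp⁻¹ - 1) * f z + tp⁻¹ * TOp tp i f z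

/-- The point obtained from `z` by the `q`-shift `z_1 ↦ q z_1`. -/
def tauPt (qp : F) (z : ℕ → F) : ℕ → F := fun k => if k = 1 then qp * z 1 else z k

/-- The operator `ω = s_{n-1} ⋯ s_1 τ_1`. -/
def omegaOp (qp : F) (n : ℕ) (f : (ℕ → F) → F) : (ℕ → F) → F :=
  (List.range' 1 (n-1)).foldl (fun g j => sOp j g) (fun z => f (tauPt qp z))

/-- The operator product `T_a T_{a+1} ⋯ T_b` (identity when `a > b`). -/
def Tprod (tp : F) (a b : ℕ) (f : (ℕ → F) → F) : (ℕ → F) → F :=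
  (List.range' a (b + 1 - a)).foldr (fun j g => TOp tp j g) f

/-- The operator product `T_a⁻¹ T_{a+1}⁻¹ ⋯ T_b⁻¹` (identity when `a > b`). -/
def TinvProd (tp : F) (a b : ℕ) (f : (ℕ → F) → F) : (ℕ → F) → F :=
  (List.range' a (b + 1 - a)).foldr (fun j g => TinvOp tp j g) f

/-- The Cherednik operator `Y_i = t^{-n+1} T_i ⋯ T_{n-1} ω T_1⁻¹ ⋯ T_{i-1}⁻¹`. -/
def YOp (qp tp : F) (n i : ℕ) (f : (ℕ → F) → F) : (ℕ → F) → F := fun z =>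
  tp ^ (1 - (n:ℤ)) * Tprod tp i (n-1) (omegaOp qp n (TinvProd tp 1 (i-1) f)) z

/-- Strict dominance order on compositions (restricted to the window `[1,n]`). -/
def domlt (n : ℕ) (μ η : ℕ → ℕ) : Prop :=
  (∃ i ∈ Finset.Icc 1 n, μ i ≠ η i) ∧
    ∀ p ∈ Finset.Icc 1 n, ∑ i ∈ Finset.Icc 1 p, μ i ≤ ∑ i ∈ Finset.Icc 1 p, η i

/-- `sortDesc n μ` is `μ⁺`, the decreasing rearrangement of `(μ_1,…,μ_n)` (1-based). -/
def sortDesc (n : ℕ) (μ : ℕ → ℕ) : ℕ → ℕ := fun i =>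
  ((((Finset.Icc 1 n).val.map μ).sort (· ≤ ·)).reverse).getD (i - 1) 0

/-- The partial order `≺` on compositions: `μ ≺ η` iff `μ⁺ < η⁺`, or `μ⁺ = η⁺` and `μ < η`. -/
def precOrd (n : ℕ) (μ η : ℕ → ℕ) : Prop :=
  domlt n (sortDesc n μ) (sortDesc n η) ∨
    ((∀ i ∈ Finset.Icc 1 n, sortDesc n μ i = sortDesc n η i) ∧ domlt n μ η)

/-- `P` is the nonsymmetric Macdonald polynomial `E_η(z; qp, tp)`:
it is of the monic triangular form `z^η + Σ_{ν ≺ η} b_{ην} z^ν` and satisfies the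
eigenvalue equations `Y_i P = η̄_i P` (stated at generic points). -/
def IsNSMac (qp tp : F) (n : ℕ) (η : ℕ → ℕ) (P : MvPolynomial ℕ F) : Prop :=
  P.coeff (truncFinsupp n η) = 1 ∧
  (∀ ν : ℕ →₀ ℕ, P.coeff ν ≠ 0 → ν = truncFinsupp n η ∨
    (IsComp n (fun j => ν j) ∧ wt n (fun j => ν j) = wt n η ∧ precOrd n (fun j => ν j) η)) ∧
  (∀ i ∈ Finset.Icc 1 n, ∀ z : ℕ → F, Generic qp n z →
    YOp qp tp n i (fun w => MvPolynomial.eval w P) z = spec qp tp n η i * MvPolynomial.eval z P)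

/-- `P` is the nonsymmetric interpolation Macdonald polynomial `E*_η(z;q,t)`:
a polynomial in `z_1,…,z_n` of total degree `≤ |η|`, with coefficient `1` on `z^η`,
vanishing at the spectral vectors `μ̄` of all compositions `μ ≠ η` with `|μ| ≤ |η|`. -/
def IsInterp (n : ℕ) (η : ℕ → ℕ) (P : MvPolynomial ℕ F) : Prop :=
  P.totalDegree ≤ wt n η ∧
  P.coeff (truncFinsupp n η) = 1 ∧
  (∀ ν : ℕ →₀ ℕ, P.coeff ν ≠ 0 → IsComp n (fun j => ν j)) ∧
  ∀ μ : ℕ → ℕ, IsComp n μ → wt n μ ≤ wt n η → truncFinsupp n μ ≠ truncFinsupp n η →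
    MvPolynomial.eval (spec q t n μ) P = 0

/-- The least element `t_1` of a finite set `I`. -/
def fmin (I : Finset ℕ) : ℕ := if h : I.Nonempty then I.min' h else 0

/-- The greatest element `t_s` of a finite set `I`. -/
def fmax (I : Finset ℕ) : ℕ := if h : I.Nonempty then I.max' h else 0

/-- The least element of `I` greater than `j`. -/
def succI (I : Finset ℕ) (j : ℕ) : ℕ := fmin (I.filter (fun k => j < k))

/-- The greatest element of `I` smaller than `j`. -/
def predI (I : Finset ℕ) (j : ℕ) : ℕ := fmax (I.filter (fun k => k < j))

/-- `â(x,y) = (t-1)x/(x-y)`. -/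
def ahat (tp x y : F) : F := (tp - 1) * x / (x - y)

/-- `b̂(x,y) = (x-ty)/(x-y)`. -/
def bhat (tp x y : F) : F := (x - tp * y) / (x - y)

/-- `A_I(z) = â(z_{t_s}/q, z_{t_1}) ∏_{u=1}^{s-1} â(z_{t_u}, z_{t_{u+1}})`. -/
def AI (qp tp : F) (I : Finset ℕ) (z : ℕ → F) : F :=
  ahat tp (z (fmax I) / qp) (z (fmin I)) *
    (((I.sort (· ≤ ·)).zip (I.sort (· ≤ ·)).tail).map (fun p => ahat tp (z p.1) (z p.2))).prod

/-- `B_I(z)`. -/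
def BI (qp tp : F) (n : ℕ) (I : Finset ℕ) (z : ℕ → F) : F :=
  (z (fmax I) - tp ^ (1 - (n:ℤ))) *
    (∏ j ∈ (Finset.Icc 1 n).filter (fun j => j < fmin I), bhat tp (z (fmax I) / qp) (z j)) *
    (∏ j ∈ (Finset.Icc 1 n).filter (fun j => j ∉ I ∧ fmin I < j), bhat tp (z (predI I j)) (z j))

/-- `χ_I^{(i)}(z)`. -/
def chiI (qp tp : F) (I : Finset ℕ) (i : ℕ) (z : ℕ → F) : F :=
  if i = fmin I then (ahat tp (z (fmax I) / qp) (z i))⁻¹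
  else (ahat tp (z (predI I i)) (z i))⁻¹

/-- `r_I^{(i)}(z) = χ_I^{(i)}(z) A_I(z) B_I(z)`. -/
def rI (qp tp : F) (n : ℕ) (I : Finset ℕ) (i : ℕ) (z : ℕ → F) : F :=
  chiI qp tp I i z * AI qp tp I z * BI qp tp n I z

/-- The point `Iz`. -/
def Ipt (qp : F) (I : Finset ℕ) (z : ℕ → F) : ℕ → F := fun j =>
  if j = fmin I then z (fmax I) / qp
  else if j ∈ I then z (predI I j)
  else z j

/-- `B̃_I(z)`. -/
def BtildeI (qp tp : F) (n : ℕ) (I : Finset ℕ) (z : ℕ → F) : F :=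
  (qp * z (fmin I) - tp ^ (1 - (n:ℤ))) *
    (∏ j ∈ (Finset.Icc 1 n).filter (fun j => j ∉ I ∧ j < fmax I), bhat tp (z (succI I j)) (z j)) *
    (∏ j ∈ (Finset.Icc 1 n).filter (fun j => fmax I < j), bhat tp (qp * z (fmin I)) (z j))

/-- `χ̃_I^{(i)}(z)`. -/
def chitildeI (qp tp : F) (I : Finset ℕ) (i : ℕ) (z : ℕ → F) : F :=
  if i = fmax I then z i / ahat tp (z i) (qp * z (fmin I))
  else z i / ahat tp (z i) (z (succI I i))

/-- The composition `c_I(η)`. -/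
def cIfun (I : Finset ℕ) (η : ℕ → ℕ) : ℕ → ℕ := fun j =>
  if j = fmax I then η (fmin I) + 1
  else if j ∈ I then η (succI I j)
  else η j

/-- `I` is maximal with respect to `η`. -/
def MaximalI (n : ℕ) (I : Finset ℕ) (η : ℕ → ℕ) : Prop :=
  (∀ j ∈ Finset.Icc 1 n, j ∉ I → j < fmax I → η j ≠ η (succI I j)) ∧
  (∀ j ∈ Finset.Icc 1 n, fmax I < j → η j ≠ η (fmin I) + 1)

/-- `I` is comaximal with respect to `lam`. -/
def CoMaximalI (n : ℕ) (I : Finset ℕ) (lam : ℕ → ℕ) : Prop :=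
  (∀ j ∈ Finset.Icc 1 n, j ∉ I → fmin I < j → lam j ≠ lam (predI I j)) ∧
  (∀ j ∈ Finset.Icc 1 n, j < fmin I → lam j ≠ lam (fmax I) - 1) ∧
  lam (fmax I) ≠ 0

/-- `J^I_η`: the collection of nonempty subsets of `{1,…,n}` maximal with respect to `η`. -/
def Jset (n : ℕ) (η : ℕ → ℕ) : Finset (Finset ℕ) :=
  (Finset.Icc 1 n).powerset.filter (fun I => I.Nonempty ∧ MaximalI n I η)

/-- The arm length `a_η(i,j) = η_i - j`. -/
def armF (η : ℕ → ℕ) (i j : ℕ) : ℕ := η i - j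

/-- The leg length `l_η(i,j)`. -/
def legF (n : ℕ) (η : ℕ → ℕ) (i j : ℕ) : ℕ :=
  ((Finset.Icc 1 n).filter fun k => i < k ∧ j ≤ η k ∧ η k ≤ η i).card +
  ((Finset.Icc 1 n).filter fun k => k < i ∧ j ≤ η k + 1 ∧ η k + 1 ≤ η i).card

/-- `d'_η(qp,tp) = ∏_{s ∈ diag(η)} (1 - qp^{a_η(s)+1} tp^{l_η(s)})`. -/
def dprime (qp tp : F) (n : ℕ) (η : ℕ → ℕ) : F :=
  ∏ i ∈ Finset.Icc 1 n, ∏ j ∈ Finset.Icc 1 (η i),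
    (1 - qp ^ (armF η i j + 1) * tp ^ (legF n η i j))

/-- `k_η = (∏_i η̄_i^{η_i}) d'_η(q⁻¹,t⁻¹)`. -/
def kconst (n : ℕ) (η : ℕ → ℕ) : F :=
  (∏ i ∈ Finset.Icc 1 n, spec q t n η i ^ (η i)) * dprime q⁻¹ t⁻¹ n η

/-- The Pieri coefficient `a_{η,c_I(η)}`. -/
def acoef (n : ℕ) (η : ℕ → ℕ) (I : Finset ℕ) : F :=
  -((q - 1) * dprime q⁻¹ t⁻¹ n η * AI q t I (spec q t n η) * BtildeI q t n I (spec q t n η)) /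
    (q ^ (η (fmin I) + 1) * (t - 1) * dprime q⁻¹ t⁻¹ n (cIfun I η))

/-- The tuples `(v_1,…,v_n)` of nonnegative integers with `v_1 + ⋯ + v_n = m`. -/
def compTuples (n m : ℕ) : Finset (Fin n → ℕ) :=
  (Fintype.piFinset fun _ => Finset.range (m + 1)).filter (fun v => ∑ i, v i = m)

/-- The (1-based) composition associated with a tuple `v : Fin n → ℕ`. -/
def ofFin (n : ℕ) (v : Fin n → ℕ) : ℕ → ℕ := fun j =>
  if h : 1 ≤ j ∧ j - 1 < n then v ⟨j - 1, h.2⟩ else 0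

/-! ### Auxiliary lemmas for `comaximal_iff_maximal` -/

lemma fmin_mem' {I : Finset ℕ} (h : I.Nonempty) : fmin I ∈ I := by
  rw [fmin, dif_pos h]; exact I.min'_mem h

lemma fmin_le' {I : Finset ℕ} {j : ℕ} (hj : j ∈ I) : fmin I ≤ j := by
  rw [fmin, dif_pos ⟨j, hj⟩]; exact I.min'_le j hj

lemma fmax_mem' {I : Finset ℕ} (h : I.Nonempty) : fmax I ∈ I := by
  rw [fmax, dif_pos h]; exact I.max'_mem h

lemma le_fmax' {I : Finset ℕ} {j : ℕ} (hj : j ∈ I) : j ≤ fmax I := by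
  rw [fmax, dif_pos ⟨j, hj⟩]; exact I.le_max' j hj

lemma succI_mem' {I : Finset ℕ} {j k : ℕ} (hk : k ∈ I) (hjk : j < k) :
    succI I j ∈ I ∧ j < succI I j := by
  have h := fmin_mem' (I := I.filter (fun m => j < m)) ⟨k, Finset.mem_filter.2 ⟨hk, hjk⟩⟩
  rw [Finset.mem_filter] at h
  exact h

lemma succI_le' {I : Finset ℕ} {j k : ℕ} (hk : k ∈ I) (hjk : j < k) :
    succI I j ≤ k :=
  fmin_le' (Finset.mem_filter.2 ⟨hk, hjk⟩)

lemma predI_mem' {I : Finset ℕ} {j k : ℕ} (hk : k ∈ I) (hkj : k < j) :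
    predI I j ∈ I ∧ predI I j < j := by
  have h := fmax_mem' (I := I.filter (fun m => m < j)) ⟨k, Finset.mem_filter.2 ⟨hk, hkj⟩⟩
  rw [Finset.mem_filter] at h
  exact h

lemma le_predI' {I : Finset ℕ} {j k : ℕ} (hk : k ∈ I) (hkj : k < j) :
    k ≤ predI I j :=
  le_fmax' (Finset.mem_filter.2 ⟨hk, hkj⟩)

lemma succI_eq_of' {I : Finset ℕ} {j k : ℕ} (hk : k ∈ I) (hjk : j < k)
    (h : ∀ m ∈ I, j < m → k ≤ m) : succI I j = k := by
  have h1 := succI_mem' hk hjk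
  exact le_antisymm (succI_le' hk hjk) (h _ h1.1 h1.2)

lemma predI_eq_of' {I : Finset ℕ} {j k : ℕ} (hk : k ∈ I) (hkj : k < j)
    (h : ∀ m ∈ I, m < j → m ≤ k) : predI I j = k := by
  have h1 := predI_mem' hk hkj
  exact le_antisymm (h _ h1.1 h1.2) (le_predI' hk hkj)

/-- `succ ∘ pred = id` on `I \ {fmin I}`. -/
lemma succI_predI {I : Finset ℕ} (hne : I.Nonempty) {j : ℕ} (hj : j ∈ I)
    (hjm : j ≠ fmin I) : succI I (predI I j) = j := by
  have hfm : fmin I < j := lt_of_le_of_ne (fmin_le' hj) (Ne.symm hjm)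
  have hp := predI_mem' (fmin_mem' hne) hfm
  refine succI_eq_of' hj hp.2 (fun m hm hpm => ?_)
  by_contra h
  push_neg at h
  exact absurd (le_predI' hm h) (not_le.2 hpm)

/-- `pred ∘ succ = id` on `I \ {fmax I}`. -/
lemma predI_succI {I : Finset ℕ} (hne : I.Nonempty) {j : ℕ} (hj : j ∈ I)
    (hjm : j ≠ fmax I) : predI I (succI I j) = j := by
  have hfm : j < fmax I := lt_of_le_of_ne (le_fmax' hj) hjm
  have hp := succI_mem' (fmax_mem' hne) hfm
  refine predI_eq_of' hj hp.2 (fun m hm hpm => ?_)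
  by_contra h
  push_neg at h
  exact absurd (succI_le' hm h) (not_le.2 hpm)

lemma succI_lt_fmin {I : Finset ℕ} (hne : I.Nonempty) {j : ℕ} (h : j < fmin I) :
    succI I j = fmin I :=
  succI_eq_of' (fmin_mem' hne) h (fun m hm _ => fmin_le' hm)

lemma predI_fmax_lt {I : Finset ℕ} (hne : I.Nonempty) {j : ℕ} (h : fmax I < j) :
    predI I j = fmax I :=
  predI_eq_of' (fmax_mem' hne) h (fun m hm _ => le_fmax' hm)

/-- For `j ∉ I` (with a predecessor), `succ (pred j) = succ j`. -/
lemma succI_predI_not_mem {I : Finset ℕ} {j k k' : ℕ} (hjI : j ∉ I)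
    (hk : k ∈ I) (hkj : k < j) (hk' : k' ∈ I) (hjk' : j < k') :
    succI I (predI I j) = succI I j := by
  have hp := predI_mem' hk hkj
  have hs := succI_mem' hk' hjk'
  refine succI_eq_of' hs.1 (lt_trans hp.2 hs.2) (fun m hm hpm => ?_)
  rcases lt_trichotomy m j with h | h | h
  · exact absurd (le_predI' hm h) (not_le.2 hpm)
  · exact absurd (h ▸ hm) hjI
  · exact succI_le' hm h

/-- For `j ∉ I` (with a successor), `pred (succ j) = pred j`. -/
lemma predI_succI_not_mem {I : Finset ℕ} {j k k' : ℕ} (hjI : j ∉ I)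
    (hk : k ∈ I) (hkj : k < j) (hk' : k' ∈ I) (hjk' : j < k') :
    predI I (succI I j) = predI I j := by
  have hp := predI_mem' hk hkj
  have hs := succI_mem' hk' hjk'
  refine predI_eq_of' hp.1 (lt_trans hp.2 hs.2) (fun m hm hpm => ?_)
  rcases lt_trichotomy m j with h | h | h
  · exact le_predI' hm h
  · exact absurd (h ▸ hm) hjI
  · exact absurd (succI_le' hm h) (not_le.2 hpm)

/-- The downward cyclic shift on `I` (identity off `I`). -/
def psiI (I : Finset ℕ) : ℕ → ℕ := fun j =>
  if j = fmin I then fmax I else if j ∈ I then predI I j else j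

/-- The upward cyclic shift on `I` (identity off `I`), inverse to `psiI`. -/
def phiI (I : Finset ℕ) : ℕ → ℕ := fun j =>
  if j = fmax I then fmin I else if j ∈ I then succI I j else j

lemma psiI_fmin {I : Finset ℕ} : psiI I (fmin I) = fmax I := by simp [psiI]

lemma psiI_of_mem {I : Finset ℕ} {j : ℕ} (h2 : j ∈ I) (h1 : j ≠ fmin I) :
    psiI I j = predI I j := by simp [psiI, h1, h2]

lemma psiI_of_not_mem {I : Finset ℕ} (hne : I.Nonempty) {j : ℕ} (h2 : j ∉ I) :
    psiI I j = j := by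
  have h1 : j ≠ fmin I := fun h => h2 (h ▸ fmin_mem' hne)
  simp [psiI, h1, h2]

lemma phiI_fmax {I : Finset ℕ} : phiI I (fmax I) = fmin I := by simp [phiI]

lemma phiI_of_mem {I : Finset ℕ} {j : ℕ} (h2 : j ∈ I) (h1 : j ≠ fmax I) :
    phiI I j = succI I j := by simp [phiI, h1, h2]

lemma phiI_of_not_mem {I : Finset ℕ} (hne : I.Nonempty) {j : ℕ} (h2 : j ∉ I) :
    phiI I j = j := by
  have h1 : j ≠ fmax I := fun h => h2 (h ▸ fmax_mem' hne)
  simp [phiI, h1, h2]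

lemma phiI_psiI {I : Finset ℕ} (hne : I.Nonempty) (j : ℕ) : phiI I (psiI I j) = j := by
  by_cases h1 : j = fmin I
  · rw [h1, psiI_fmin, phiI_fmax]
  · by_cases h2 : j ∈ I
    · have hfm : fmin I < j := lt_of_le_of_ne (fmin_le' h2) (Ne.symm h1)
      have hp := predI_mem' (fmin_mem' hne) hfm
      have hpx : predI I j ≠ fmax I := by
        have := le_fmax' h2
        omega
      rw [psiI_of_mem h2 h1, phiI_of_mem hp.1 hpx, succI_predI hne h2 h1]
    · rw [psiI_of_not_mem hne h2, phiI_of_not_mem hne h2]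

lemma psiI_phiI {I : Finset ℕ} (hne : I.Nonempty) (j : ℕ) : psiI I (phiI I j) = j := by
  by_cases h1 : j = fmax I
  · rw [h1, phiI_fmax, psiI_fmin]
  · by_cases h2 : j ∈ I
    · have hfm : j < fmax I := lt_of_le_of_ne (le_fmax' h2) h1
      have hp := succI_mem' (fmax_mem' hne) hfm
      have hpx : succI I j ≠ fmin I := by
        have := fmin_le' h2
        omega
      rw [phiI_of_mem h2 h1, psiI_of_mem hp.1 hpx, predI_succI hne h2 h1]
    · rw [phiI_of_not_mem hne h2, psiI_of_not_mem hne h2]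

lemma psiI_mem_Icc {n : ℕ} {I : Finset ℕ} (hI : I ⊆ Finset.Icc 1 n) (hne : I.Nonempty)
    {j : ℕ} (hj : j ∈ Finset.Icc 1 n) : psiI I j ∈ Finset.Icc 1 n := by
  unfold psiI
  by_cases h1 : j = fmin I
  · simpa [h1] using hI (fmax_mem' hne)
  · by_cases h2 : j ∈ I
    · have hfm : fmin I < j := lt_of_le_of_ne (fmin_le' h2) (Ne.symm h1)
      have hp := predI_mem' (fmin_mem' hne) hfm
      simpa [h1, h2] using hI hp.1
    · simpa [h1, h2] using hj

lemma phiI_mem_Icc {n : ℕ} {I : Finset ℕ} (hI : I ⊆ Finset.Icc 1 n) (hne : I.Nonempty)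
    {j : ℕ} (hj : j ∈ Finset.Icc 1 n) : phiI I j ∈ Finset.Icc 1 n := by
  unfold phiI
  by_cases h1 : j = fmax I
  · simpa [h1] using hI (fmin_mem' hne)
  · by_cases h2 : j ∈ I
    · have hfm : j < fmax I := lt_of_le_of_ne (le_fmax' h2) h1
      have hp := succI_mem' (fmax_mem' hne) hfm
      simpa [h1, h2] using hI hp.1
    · simpa [h1, h2] using hj

/-- Values of `c_I ν` along `psiI`. -/
lemma cIfun_psiI {I : Finset ℕ} (hne : I.Nonempty) (ν : ℕ → ℕ) (j : ℕ) :
    cIfun I ν (psiI I j) = if j = fmin I then ν j + 1 else ν j := by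
  unfold psiI cIfun
  by_cases h1 : j = fmin I
  · simp [h1]
  · by_cases h2 : j ∈ I
    · have hfm : fmin I < j := lt_of_le_of_ne (fmin_le' h2) (Ne.symm h1)
      have hp := predI_mem' (fmin_mem' hne) hfm
      have hpx : predI I j ≠ fmax I := by
        have := le_fmax' h2
        omega
      rw [if_neg h1, if_pos h2, if_neg hpx, if_pos hp.1, succI_predI hne h2 h1, if_neg h1]
    · have hja : j ≠ fmax I := fun h => h2 (h ▸ fmax_mem' hne)
      simp [h1, h2, hja]

lemma psiI_lt_psiI {n : ℕ} {I : Finset ℕ} (hI : I ⊆ Finset.Icc 1 n) (hne : I.Nonempty)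
    {ν : ℕ → ℕ} (hmax : MaximalI n I ν) {i j : ℕ}
    (hi : i ∈ Finset.Icc 1 n) (hj : j ∈ Finset.Icc 1 n)
    (hi' : i ≠ fmin I) (hj' : j ≠ fmin I) (hv : ν j = ν i) (hlt : j < i) :
    psiI I j < psiI I i := by
  have hminI := fmin_mem' hne
  have hmaxI := fmax_mem' hne
  by_cases hiI : i ∈ I
  · have hfi : fmin I < i := lt_of_le_of_ne (fmin_le' hiI) (Ne.symm hi')
    have hpi := predI_mem' hminI hfi
    rw [psiI_of_mem hiI hi']
    by_cases hjI : j ∈ I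
    · rw [psiI_of_mem hjI hj']
      have h1 : j ≤ predI I i := le_predI' hjI hlt
      have hfj : fmin I < j := lt_of_le_of_ne (fmin_le' hjI) (Ne.symm hj')
      have h2 := (predI_mem' hminI hfj).2
      omega
    · rw [psiI_of_not_mem hne hjI]
      by_contra hcon
      push_neg at hcon
      have hpj : predI I i < j := lt_of_le_of_ne hcon (fun h => hjI (h ▸ hpi.1))
      have hsucc : succI I j = i := by
        refine succI_eq_of' hiI hlt (fun m hm hjm => ?_)
        by_contra hmi
        push_neg at hmi
        have := le_predI' hm hmi
        omega
      have hmm := hmax.1 j hj hjI (lt_of_lt_of_le hlt (le_fmax' hiI))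
      rw [hsucc] at hmm
      exact hmm hv
  · rw [psiI_of_not_mem hne hiI]
    by_cases hjI : j ∈ I
    · rw [psiI_of_mem hjI hj']
      have hfj : fmin I < j := lt_of_le_of_ne (fmin_le' hjI) (Ne.symm hj')
      have := (predI_mem' hminI hfj).2
      omega
    · rw [psiI_of_not_mem hne hjI]; exact hlt

lemma prec_transfer {n : ℕ} {I : Finset ℕ} (hI : I ⊆ Finset.Icc 1 n) (hne : I.Nonempty)
    {ν : ℕ → ℕ} (hmax : MaximalI n I ν) (i j : ℕ)
    (hi : i ∈ Finset.Icc 1 n) (hj : j ∈ Finset.Icc 1 n) :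
    (ν i < ν j ∨ (ν j = ν i ∧ j < i)) ↔
      (cIfun I ν (psiI I i) < cIfun I ν (psiI I j) ∨
        (cIfun I ν (psiI I j) = cIfun I ν (psiI I i) ∧ psiI I j < psiI I i)) := by
  obtain ⟨m1, m2⟩ := hmax
  have hminI := fmin_mem' hne
  have hmaxI := fmax_mem' hne
  have hminmax : fmin I ≤ fmax I := fmin_le' hmaxI
  rw [cIfun_psiI hne, cIfun_psiI hne]
  by_cases hij : i = j
  · subst hij; simp
  by_cases hjf : j = fmin I
  · subst hjf
    have e1 : (if fmin I = fmin I then ν (fmin I) + 1 else ν (fmin I)) = ν (fmin I) + 1 :=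
      if_pos rfl
    have e2 : (if i = fmin I then ν i + 1 else ν i) = ν i := if_neg hij
    rw [e1, e2, psiI_fmin]
    have f1 : ν (fmin I) = ν i → fmin I < i := by
      intro hv
      by_contra hcon
      push_neg at hcon
      have hilt : i < fmin I := lt_of_le_of_ne hcon hij
      have hiI : i ∉ I := fun h => absurd (fmin_le' h) (not_le.2 hilt)
      have hmm := m1 i hi hiI (lt_of_lt_of_le hilt hminmax)
      rw [succI_lt_fmin hne hilt] at hmm
      exact hmm hv.symm
    by_cases hiI : i ∈ I
    · rw [psiI_of_mem hiI hij]
      have hfi : fmin I < i := lt_of_le_of_ne (fmin_le' hiI) (Ne.symm hij)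
      have hp := predI_mem' hminI hfi
      have f2 : predI I i ≤ fmax I := le_fmax' hp.1
      omega
    · rw [psiI_of_not_mem hne hiI]
      have f2 : ν i = ν (fmin I) + 1 → i ≤ fmax I := by
        intro hv
        by_contra hcon
        push_neg at hcon
        exact m2 i hi hcon hv
      omega
  by_cases hif : i = fmin I
  · subst hif
    have e1 : (if fmin I = fmin I then ν (fmin I) + 1 else ν (fmin I)) = ν (fmin I) + 1 :=
      if_pos rfl
    have e2 : (if j = fmin I then ν j + 1 else ν j) = ν j := if_neg hjf
    rw [e1, e2, psiI_fmin]
    have f1 : ν j = ν (fmin I) → ¬ (j < fmin I) := by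
      intro hv hcon
      have hjI : j ∉ I := fun h => absurd (fmin_le' h) (not_le.2 hcon)
      have hmm := m1 j hj hjI (lt_of_lt_of_le hcon hminmax)
      rw [succI_lt_fmin hne hcon] at hmm
      exact hmm hv
    by_cases hjI : j ∈ I
    · rw [psiI_of_mem hjI hjf]
      have hfj : fmin I < j := lt_of_le_of_ne (fmin_le' hjI) (Ne.symm hjf)
      have hp := predI_mem' hminI hfj
      have f2 : predI I j < fmax I := lt_of_lt_of_le hp.2 (le_fmax' hjI)
      omega
    · rw [psiI_of_not_mem hne hjI]
      have f2 : ν j = ν (fmin I) + 1 → j < fmax I := by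
        intro hv
        by_contra hcon
        push_neg at hcon
        have hja : j ≠ fmax I := fun h => hjI (h ▸ hmaxI)
        exact m2 j hj (lt_of_le_of_ne hcon (Ne.symm hja)) hv
      omega
  · have e1 : (if i = fmin I then ν i + 1 else ν i) = ν i := if_neg hif
    have e2 : (if j = fmin I then ν j + 1 else ν j) = ν j := if_neg hjf
    rw [e1, e2]
    have hf : ν j = ν i → j < i → psiI I j < psiI I i :=
      fun hv hlt => psiI_lt_psiI hI hne ⟨m1, m2⟩ hi hj hif hjf hv hlt
    have hb : ν j = ν i → i < j → psiI I i < psiI I j :=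
      fun hv hlt => psiI_lt_psiI hI hne ⟨m1, m2⟩ hj hi hjf hif hv.symm hlt
    have hij' : i ≠ j := hij
    omega

lemma lprime_eq_card (n : ℕ) (η : ℕ → ℕ) (i : ℕ) :
    lprime n η i = ((Finset.Icc 1 n).filter
      (fun j => η i < η j ∨ (η j = η i ∧ j < i))).card := by
  have hdis : Disjoint ((Finset.Icc 1 n).filter fun j => j < i ∧ η i ≤ η j)
      ((Finset.Icc 1 n).filter fun j => i < j ∧ η i < η j) := by
    rw [Finset.disjoint_left]
    intro a ha hb
    rw [Finset.mem_filter] at ha hb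
    omega
  rw [lprime, ← Finset.card_union_of_disjoint hdis, Finset.filter_union_right]
  congr 1
  apply Finset.filter_congr
  intro x _
  rcases eq_or_ne x i with rfl | hxi
  · simp
  · constructor <;> intro h <;> omega

lemma lprime_psiI {n : ℕ} {I : Finset ℕ} (hI : I ⊆ Finset.Icc 1 n) (hne : I.Nonempty)
    {ν : ℕ → ℕ} (hmax : MaximalI n I ν) {i : ℕ} (hi : i ∈ Finset.Icc 1 n) :
    lprime n (cIfun I ν) (psiI I i) = lprime n ν i := by
  rw [lprime_eq_card, lprime_eq_card]
  refine Finset.card_bij' (fun j _ => phiI I j) (fun j _ => psiI I j) ?_ ?_ ?_ ?_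
  · intro a ha
    rw [Finset.mem_filter] at ha ⊢
    have hφ : phiI I a ∈ Finset.Icc 1 n := phiI_mem_Icc hI hne ha.1
    refine ⟨hφ, ?_⟩
    have hiff := prec_transfer hI hne hmax i (phiI I a) hi hφ
    rw [psiI_phiI hne] at hiff
    exact hiff.mpr ha.2
  · intro a ha
    rw [Finset.mem_filter] at ha ⊢
    exact ⟨psiI_mem_Icc hI hne ha.1,
      (prec_transfer hI hne hmax i a hi ha.1).mp ha.2⟩
  · intro a _; exact psiI_phiI hne a
  · intro a _; exact phiI_psiI hne a

/-- Proposition 5: `I` is comaximal with respect to `λ` iff there is a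
composition `ν` such that `I` is maximal with respect to `ν`, `λ = c_I(ν)` and `Iλ̄ = ν̄`. -/
theorem comaximal_iff_maximal (n : ℕ) (hn : 2 ≤ n)
    (lam : ℕ → ℕ) (hlam : IsComp n lam)
    (I : Finset ℕ) (hI : I ⊆ Finset.Icc 1 n) (hne : I.Nonempty) :
    CoMaximalI n I lam ↔
      ∃ ν : ℕ → ℕ, IsComp n ν ∧ MaximalI n I ν ∧
        (∀ j, lam j = cIfun I ν j) ∧
        (∀ j ∈ Finset.Icc 1 n, Ipt q I (spec q t n lam) j = spec q t n ν j) := by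
  have hminI := fmin_mem' hne
  have hmaxI := fmax_mem' hne
  have hminmax : fmin I ≤ fmax I := fmin_le' hmaxI
  constructor
  · rintro ⟨h1, h2, h3⟩
    set ν : ℕ → ℕ := fun j =>
      if j = fmin I then lam (fmax I) - 1 else if j ∈ I then lam (predI I j) else lam j with hν
    have hcv : ∀ j, lam j = cIfun I ν j := by
      intro j
      unfold cIfun
      by_cases hj1 : j = fmax I
      · subst hj1
        rw [if_pos rfl]
        have hfm : ν (fmin I) = lam (fmax I) - 1 := by simp [hν]
        omega
      · by_cases hj2 : j ∈ I
        · rw [if_neg hj1, if_pos hj2]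
          have hlt : j < fmax I := lt_of_le_of_ne (le_fmax' hj2) hj1
          have hs := succI_mem' hmaxI hlt
          have hs1 : succI I j ≠ fmin I := by
            have := fmin_le' hj2; have := hs.2; omega
          simp only [hν]
          rw [if_neg hs1, if_pos hs.1, predI_succI hne hj2 hj1]
        · have hj3 : j ≠ fmin I := fun h => hj2 (h ▸ hminI)
          simp [hν, hj1, hj2, hj3]
    have hcomp : IsComp n ν := by
      intro j hj0
      by_cases hj1 : j = fmin I
      · exact hI (hj1 ▸ hminI)
      · by_cases hj2 : j ∈ I
        · exact hI hj2
        · apply hlam j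
          simpa [hν, hj1, hj2] using hj0
    have hmaxv : MaximalI n I ν := by
      constructor
      · intro j hj hjI hjlt
        have hjm : j ≠ fmin I := fun h => hjI (h ▸ hminI)
        have hs := succI_mem' hmaxI hjlt
        by_cases hlt : j < fmin I
        · rw [succI_lt_fmin hne hlt]
          simp only [hν]
          rw [if_neg hjm, if_neg hjI, if_true]
          exact h2 j hj hlt
        · have hflt : fmin I < j := by
            rcases lt_or_eq_of_le (not_lt.1 hlt) with h | h
            · exact h
            · exact absurd h.symm hjm
          have hsm : succI I j ≠ fmin I := by have := hs.2; omega
          simp only [hν]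
          rw [if_neg hjm, if_neg hjI, if_neg hsm, if_pos hs.1,
            predI_succI_not_mem hjI hminI hflt hmaxI hjlt]
          exact h1 j hj hjI hflt
      · intro j hj hjlt
        have hjI : j ∉ I := fun h => absurd (le_fmax' h) (not_le.2 hjlt)
        have hjm : j ≠ fmin I := fun h => hjI (h ▸ hminI)
        have hh := h1 j hj hjI (lt_of_le_of_lt hminmax hjlt)
        rw [predI_fmax_lt hne hjlt] at hh
        simp only [hν]
        rw [if_neg hjm, if_neg hjI, if_true]
        omega
    have hfun : lam = cIfun I ν := funext hcv
    refine ⟨ν, hcomp, hmaxv, hcv, ?_⟩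
    have hq0 : q ≠ 0 := by
      have hX : (MvPolynomial.X 0 : MvPolynomial (Fin 2) ℚ) ≠ 0 := MvPolynomial.X_ne_zero 0
      exact (map_ne_zero_iff _ (IsFractionRing.injective (MvPolynomial (Fin 2) ℚ) F)).2 hX
    have hrank : ∀ k, k ∈ Finset.Icc 1 n → lprime n lam (psiI I k) = lprime n ν k := by
      intro k hk
      rw [hfun]
      exact lprime_psiI hI hne hmaxv hk
    intro j hj
    simp only [Ipt, spec]
    by_cases hj1 : j = fmin I
    · rw [if_pos hj1]
      have hps : psiI I j = fmax I := by rw [hj1, psiI_fmin]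
      have hr := hrank j hj
      rw [hps] at hr
      have hνj : ν j = lam (fmax I) - 1 := by simp [hν, hj1]
      rw [hνj, ← hr]
      obtain ⟨b, hb⟩ : ∃ b, lam (fmax I) = b + 1 := ⟨lam (fmax I) - 1, by omega⟩
      rw [hb]
      simp only [Nat.add_sub_cancel]
      rw [pow_succ, div_eq_iff hq0]
      ring
    · by_cases hj2 : j ∈ I
      · rw [if_neg hj1, if_pos hj2]
        have hps : psiI I j = predI I j := psiI_of_mem hj2 hj1
        have hr := hrank j hj
        rw [hps] at hr
        have hνj : ν j = lam (predI I j) := by simp [hν, hj1, hj2]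
        rw [hνj, hr]
      · rw [if_neg hj1, if_neg hj2]
        have hps : psiI I j = j := psiI_of_not_mem hne hj2
        have hr := hrank j hj
        rw [hps] at hr
        have hνj : ν j = lam j := by simp [hν, hj1, hj2]
        rw [hνj, hr]
  · rintro ⟨ν, hcomp, ⟨m1, m2⟩, hcv, -⟩
    have hlmax : lam (fmax I) = ν (fmin I) + 1 := by
      rw [hcv]; unfold cIfun; rw [if_pos rfl]
    refine ⟨?_, ?_, ?_⟩
    · intro j hj hjI hflt
      have hjm : j ≠ fmin I := fun h => hjI (h ▸ hminI)
      have hja : j ≠ fmax I := fun h => hjI (h ▸ hmaxI)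
      have hlj : lam j = ν j := by
        rw [hcv]; unfold cIfun; rw [if_neg hja, if_neg hjI]
      by_cases hfj : fmax I < j
      · rw [predI_fmax_lt hne hfj, hlj, hlmax]
        exact m2 j hj hfj
      · push_neg at hfj
        have hjlt : j < fmax I := lt_of_le_of_ne hfj hja
        have hp := predI_mem' hminI hflt
        have hpa : predI I j ≠ fmax I := by have := hp.2; omega
        have hlp : lam (predI I j) = ν (succI I j) := by
          rw [hcv]; unfold cIfun
          rw [if_neg hpa, if_pos hp.1, succI_predI_not_mem hjI hminI hflt hmaxI hjlt]
        rw [hlp, hlj]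
        exact m1 j hj hjI hjlt
    · intro j hj hjlt
      have hjI : j ∉ I := fun h => absurd (fmin_le' h) (not_le.2 hjlt)
      have hja : j ≠ fmax I := by have := hminmax; omega
      have hlj : lam j = ν j := by
        rw [hcv]; unfold cIfun; rw [if_neg hja, if_neg hjI]
      have hmm := m1 j hj hjI (lt_of_lt_of_le hjlt hminmax)
      rw [succI_lt_fmin hne hjlt] at hmm
      rw [hlj, hlmax]
      simpa using hmm
    · rw [hlmax]; omega
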